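/- Let Γ be a signed graph of order m+1 and let v be a vertex of Γ with negative degree d_v⁻ = 0 (no negative edge is incident to v). Let Γ' = Γ − v be the signed graph of order m obtained by deleting v together with its incident edges. If (α_1, α_2, …, α_{m+1}) and (β_1, β_2, …, β_m) are the ordered net-Laplacian spectra of Γ and Γ' respectively, then α_p − 1 ≤ β_p ≤ α_{p+1} for every p = 1, 2, …, m. -/

import Mathlib

open Polynomial

/-- A signed adjacency matrix: symmetric, zero diagonal, entries in {-1,0,1}. -/
def IsSignedAdj {n : ℕ} (A : Matrix (Fin n) (Fin n) ℝ) : Prop :=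
  A.IsSymm ∧ (∀ i, A i i = 0) ∧ ∀ i j, A i j = -1 ∨ A i j = 0 ∨ A i j = 1

/-- Degree of vertex `i`: number of neighbours. -/
noncomputable def deg {n : ℕ} (A : Matrix (Fin n) (Fin n) ℝ) (i : Fin n) : ℕ :=
  {j | A i j ≠ 0}.ncard

/-- Negative degree of vertex `i`. -/
noncomputable def negDeg {n : ℕ} (A : Matrix (Fin n) (Fin n) ℝ) (i : Fin n) : ℕ :=
  {j | A i j = -1}.ncard

/-- Positive degree of vertex `i`. -/
noncomputable def posDeg {n : ℕ} (A : Matrix (Fin n) (Fin n) ℝ) (i : Fin n) : ℕ :=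
  {j | A i j = 1}.ncard

/-- Laplacian matrix `L = D - A`. -/
noncomputable def lap {n : ℕ} (A : Matrix (Fin n) (Fin n) ℝ) : Matrix (Fin n) (Fin n) ℝ :=
  Matrix.diagonal (fun i => (deg A i : ℝ)) - A

/-- Net-Laplacian matrix `N = D± - A`, where `D±` is the diagonal of signed degrees. -/
noncomputable def netLap {n : ℕ} (A : Matrix (Fin n) (Fin n) ℝ) : Matrix (Fin n) (Fin n) ℝ :=
  Matrix.diagonal (fun i => ∑ j, A i j) - A

/-- Normalized net-Laplacian `D^{-1/2} N D^{-1/2}`. -/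
noncomputable def normNetLap {n : ℕ} (A : Matrix (Fin n) (Fin n) ℝ) :
    Matrix (Fin n) (Fin n) ℝ :=
  Matrix.diagonal (fun i => (Real.sqrt (deg A i))⁻¹) * netLap A *
    Matrix.diagonal (fun i => (Real.sqrt (deg A i))⁻¹)

/-- `μ` is the ordered (non-decreasing) spectrum of `M` : it is monotone and lists the
eigenvalues of `M` with multiplicity, i.e. the characteristic polynomial splits as
`∏ (X - μ i)`. -/
def IsOrderedSpectrum {n : ℕ} (M : Matrix (Fin n) (Fin n) ℝ) (μ : Fin n → ℝ) : Prop :=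
  Monotone μ ∧ M.charpoly = ∏ i, (X - C (μ i))

/-- Deleting the edge `uv`: set the `(u,v)` and `(v,u)` entries to `0`. -/
def deleteEdge {n : ℕ} (A : Matrix (Fin n) (Fin n) ℝ) (u v : Fin n) :
    Matrix (Fin n) (Fin n) ℝ :=
  Matrix.of fun i j => if (i = u ∧ j = v) ∨ (i = v ∧ j = u) then 0 else A i j

/-- Deleting the vertex `v`: principal submatrix omitting row/column `v`. -/
def deleteVertex {n : ℕ} (A : Matrix (Fin (n+1)) (Fin (n+1)) ℝ) (v : Fin (n+1)) :
    Matrix (Fin n) (Fin n) ℝ :=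
  A.submatrix v.succAbove v.succAbove

/-!
Let `N`, `N'` be the net-Laplacians of `Γ` and `Γ - v`, and let `ι x` be `x` with a zero inserted
at `v`, an isometry. The principal submatrix of `N` at `v` is `N' + diag (A i v)`, because the
signed degree of a neighbour `i` of `v` loses `A i v` when `v` is deleted. Since `d_v⁻ = 0`, these
weights lie in `[0, 1]`, so `⟪x, N' x⟫ ≤ ⟪ι x, N ι x⟫ ≤ ⟪x, N' x⟫ + ‖x‖²`.

Both bounds become eigenvalue inequalities by the Courant–Fischer dimension count. The
eigenvectors of `N'` with eigenvalue `≥ β_p` span at least `m - p + 1` dimensions and those of `N`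
with eigenvalue `≤ α_{p+1}` at least `p + 1`, more than `m + 1` together; so the first span meets
the `ι`-preimage of the second in some `x ≠ 0`, and
`β_p ‖x‖² ≤ ⟪x, N' x⟫ ≤ ⟪ι x, N ι x⟫ ≤ α_{p+1} ‖x‖²`.
Symmetrically, `α_p ≤ β_p + 1`.
-/

open Matrix Module Finset

theorem Submodule.exists_ne_zero_mem_map_mem {K V W : Type*} [Field K] [AddCommGroup V]
    [Module K V] [AddCommGroup W] [Module K W] [FiniteDimensional K W]
    {f : V →ₗ[K] W} (hf : Function.Injective f) {U : Submodule K V}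
    {U' : Submodule K W} (h : finrank K W < finrank K U + finrank K U') :
    ∃ x ∈ U, f x ∈ U' ∧ x ≠ 0 := by
  by_contra! hU
  have hdisj : Disjoint (U.map f) U' := by
    refine Submodule.disjoint_def.mpr ?_
    rintro _ ⟨x, hx, rfl⟩ hfx
    rw [hU x hx hfx, map_zero]
  have := Submodule.finrank_add_finrank_le_of_disjoint hdisj
  rw [(Submodule.equivMapOfInjective f hf U).finrank_eq.symm] at this
  omega

theorem dotProduct_self_pos_of_ne_zero {ι : Type*} [Fintype ι] {x : ι → ℝ} (hx : x ≠ 0) :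
    0 < x ⬝ᵥ x := by
  simpa using dotProduct_star_self_pos_iff.mpr hx

theorem LinearMap.injective_of_forall_dotProduct_self {ι κ : Type*} [Fintype ι] [Fintype κ]
    {f : (ι → ℝ) →ₗ[ℝ] (κ → ℝ)} (hf : ∀ x, f x ⬝ᵥ f x = x ⬝ᵥ x) : Function.Injective f :=
  (injective_iff_map_eq_zero f).mpr fun x hx => by simpa [hx, eq_comm] using hf x

theorem card_filter_comp_eq_of_map_eq {ι α : Type*} [Fintype ι] {f g : ι → α}
    (h : univ.val.map f = univ.val.map g) (P : α → Prop) [DecidablePred P] :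
    #{i | P (f i)} = #{i | P (g i)} := by
  have := congrArg (Multiset.countP P) h
  rwa [Multiset.countP_map, Multiset.countP_map] at this

theorem dotProduct_diagonal_mulVec {ι R : Type*} [Fintype ι] [DecidableEq ι] [CommSemiring R]
    (d x : ι → R) : x ⬝ᵥ (diagonal d *ᵥ x) = ∑ i, d i * x i ^ 2 := by
  simp only [dotProduct, mulVec_diagonal]
  exact sum_congr rfl fun i _ => by ring

theorem dotProduct_diagonal_mulVec_mem_Icc {ι : Type*} [Fintype ι] [DecidableEq ι] {d : ι → ℝ}
    (hd : ∀ i, d i ∈ Set.Icc 0 1) (x : ι → ℝ) : x ⬝ᵥ (diagonal d *ᵥ x) ∈ Set.Icc 0 (x ⬝ᵥ x) := by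
  rw [dotProduct_diagonal_mulVec]
  refine ⟨sum_nonneg fun i _ => mul_nonneg (hd i).1 (sq_nonneg _), ?_⟩
  calc ∑ i, d i * x i ^ 2 ≤ ∑ i, x i ^ 2 :=
        sum_le_sum fun i _ => mul_le_of_le_one_left (sq_nonneg _) (hd i).2
    _ = x ⬝ᵥ x := by simp [dotProduct, sq]

namespace Matrix.IsHermitian

variable {ι : Type*} [Fintype ι] [DecidableEq ι] {M : Matrix ι ι ℝ} (hM : M.IsHermitian)

noncomputable def eigenvectorSpan (S : Finset ι) : Submodule ℝ (ι → ℝ) :=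
  Submodule.span ℝ (Set.range fun i : S => ⇑(hM.eigenvectorBasis i))

theorem dotProduct_eigenvectorBasis (i j : ι) :
    ⇑(hM.eigenvectorBasis i) ⬝ᵥ ⇑(hM.eigenvectorBasis j) = if i = j then 1 else 0 := by
  rw [dotProduct_comm, ← star_trivial ⇑(hM.eigenvectorBasis i),
    ← EuclideanSpace.inner_eq_star_dotProduct,
    orthonormal_iff_ite.mp hM.eigenvectorBasis.orthonormal]

theorem finrank_eigenvectorSpan (S : Finset ι) : finrank ℝ (hM.eigenvectorSpan S) = #S := by
  have hli : LinearIndependent ℝ fun i : S => ⇑(hM.eigenvectorBasis i) := by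
    refine Fintype.linearIndependent_iff.mpr fun g hg j => ?_
    simpa [sum_dotProduct, dotProduct_eigenvectorBasis] using
      congrArg (· ⬝ᵥ ⇑(hM.eigenvectorBasis j)) hg
  rw [eigenvectorSpan, finrank_span_eq_card hli, Fintype.card_coe]

theorem exists_coeffs_of_mem_eigenvectorSpan {S : Finset ι} {x : ι → ℝ}
    (hx : x ∈ hM.eigenvectorSpan S) :
    ∃ c : S → ℝ, x ⬝ᵥ x = ∑ i, c i ^ 2 ∧ x ⬝ᵥ (M *ᵥ x) = ∑ i, hM.eigenvalues i.1 * c i ^ 2 := by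
  obtain ⟨c, rfl⟩ := (Submodule.mem_span_range_iff_exists_fun ℝ).mp hx
  have hdot (d : S → ℝ) : (∑ i, c i • ⇑(hM.eigenvectorBasis i)) ⬝ᵥ
      (∑ i, d i • ⇑(hM.eigenvectorBasis i)) = ∑ i, c i * d i := by
    simp [sum_dotProduct, dotProduct_sum, dotProduct_eigenvectorBasis, mul_comm]
  have hMx : M *ᵥ ∑ i, c i • ⇑(hM.eigenvectorBasis i)
      = ∑ i, (c i * hM.eigenvalues i.1) • ⇑(hM.eigenvectorBasis i) := by
    simp [mulVec_sum, mulVec_smul, mulVec_eigenvectorBasis, smul_smul]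
  refine ⟨c, ?_, ?_⟩
  · simp only [hdot, sq]
  · simp only [hMx, hdot]
    exact sum_congr rfl fun i _ => by ring

theorem dotProduct_mulVec_le_of_mem_eigenvectorSpan {S : Finset ι} {t : ℝ}
    (hS : ∀ i ∈ S, hM.eigenvalues i ≤ t) {x : ι → ℝ} (hx : x ∈ hM.eigenvectorSpan S) :
    x ⬝ᵥ (M *ᵥ x) ≤ t * (x ⬝ᵥ x) := by
  obtain ⟨c, hxx, hxMx⟩ := hM.exists_coeffs_of_mem_eigenvectorSpan hx
  rw [hxx, hxMx, mul_sum]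
  exact sum_le_sum fun i _ => mul_le_mul_of_nonneg_right (hS i i.2) (sq_nonneg _)

theorem le_dotProduct_mulVec_of_mem_eigenvectorSpan {S : Finset ι} {t : ℝ}
    (hS : ∀ i ∈ S, t ≤ hM.eigenvalues i) {x : ι → ℝ} (hx : x ∈ hM.eigenvectorSpan S) :
    t * (x ⬝ᵥ x) ≤ x ⬝ᵥ (M *ᵥ x) := by
  obtain ⟨c, hxx, hxMx⟩ := hM.exists_coeffs_of_mem_eigenvectorSpan hx
  rw [hxx, hxMx, mul_sum]
  exact sum_le_sum fun i _ => mul_le_mul_of_nonneg_right (hS i i.2) (sq_nonneg _)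

end Matrix.IsHermitian

namespace IsOrderedSpectrum

variable {n N : ℕ} {M : Matrix (Fin N) (Fin N) ℝ} {M' : Matrix (Fin n) (Fin n) ℝ}
  {μ : Fin N → ℝ} {ν : Fin n → ℝ} {ι : (Fin n → ℝ) →ₗ[ℝ] (Fin N → ℝ)}

theorem map_eq_map_eigenvalues (hM : M.IsHermitian)
    (hμ : IsOrderedSpectrum M μ) : univ.val.map μ = univ.val.map hM.eigenvalues := by
  have h : M.charpoly.roots = univ.val.map μ := by
    rw [hμ.2, Polynomial.roots_prod]
    · simp
    · simp [prod_ne_zero_iff, Polynomial.X_sub_C_ne_zero]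
  simpa [hM.roots_charpoly_eq_eigenvalues] using h.symm

theorem succ_le_card_eigenvalues_le (hM : M.IsHermitian)
    (hμ : IsOrderedSpectrum M μ) (k : Fin N) :
    k + 1 ≤ #{i | hM.eigenvalues i ≤ μ k} := by
  rw [← card_filter_comp_eq_of_map_eq (hμ.map_eq_map_eigenvalues hM) (· ≤ μ k), ← Fin.card_Iic]
  exact card_le_card fun i hi => by simpa using hμ.1 (mem_Iic.mp hi)

theorem sub_le_card_le_eigenvalues (hM : M.IsHermitian)
    (hμ : IsOrderedSpectrum M μ) (k : Fin N) :
    N - k ≤ #{i | μ k ≤ hM.eigenvalues i} := by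
  rw [← card_filter_comp_eq_of_map_eq (hμ.map_eq_map_eigenvalues hM) (μ k ≤ ·), ← Fin.card_Ici]
  exact card_le_card fun i hi => by simpa using hμ.1 (mem_Ici.mp hi)

theorem exists_submodule_dotProduct_mulVec_le (hM : M.IsHermitian) (hμ : IsOrderedSpectrum M μ)
    (k : Fin N) : ∃ U : Submodule ℝ (Fin N → ℝ), k + 1 ≤ finrank ℝ U ∧
      ∀ x ∈ U, x ⬝ᵥ (M *ᵥ x) ≤ μ k * (x ⬝ᵥ x) := by
  refine ⟨hM.eigenvectorSpan {i | hM.eigenvalues i ≤ μ k}, ?_, fun x hx =>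
    hM.dotProduct_mulVec_le_of_mem_eigenvectorSpan (fun i hi => (mem_filter.mp hi).2) hx⟩
  rw [hM.finrank_eigenvectorSpan]
  exact hμ.succ_le_card_eigenvalues_le hM k

theorem exists_submodule_le_dotProduct_mulVec (hM : M.IsHermitian) (hμ : IsOrderedSpectrum M μ)
    (k : Fin N) : ∃ U : Submodule ℝ (Fin N → ℝ), N - k ≤ finrank ℝ U ∧
      ∀ x ∈ U, μ k * (x ⬝ᵥ x) ≤ x ⬝ᵥ (M *ᵥ x) := by
  refine ⟨hM.eigenvectorSpan {i | μ k ≤ hM.eigenvalues i}, ?_, fun x hx =>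
    hM.le_dotProduct_mulVec_of_mem_eigenvectorSpan (fun i hi => (mem_filter.mp hi).2) hx⟩
  rw [hM.finrank_eigenvectorSpan]
  exact hμ.sub_le_card_le_eigenvalues hM k

theorem le_add_of_le_compression (hM : M.IsHermitian) (hM' : M'.IsHermitian)
    (hμ : IsOrderedSpectrum M μ) (hν : IsOrderedSpectrum M' ν)
    (hι : ∀ x, ι x ⬝ᵥ ι x = x ⬝ᵥ x) {c : ℝ}
    (h : ∀ x, x ⬝ᵥ (M' *ᵥ x) ≤ ι x ⬝ᵥ (M *ᵥ ι x) + c * (x ⬝ᵥ x))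
    {p : Fin n} {k : Fin N} (hpk : p + N ≤ k + n) : ν p ≤ μ k + c := by
  obtain ⟨V, hV, hqV⟩ := hν.exists_submodule_le_dotProduct_mulVec hM' p
  obtain ⟨U, hU, hqU⟩ := hμ.exists_submodule_dotProduct_mulVec_le hM k
  obtain ⟨x, hxV, hxU, hx0⟩ := Submodule.exists_ne_zero_mem_map_mem
    (LinearMap.injective_of_forall_dotProduct_self hι) (U := V) (U' := U)
    (by rw [finrank_fin_fun]; omega)
  refine le_of_mul_le_mul_right ?_ (dotProduct_self_pos_of_ne_zero hx0)
  calc ν p * (x ⬝ᵥ x) ≤ x ⬝ᵥ (M' *ᵥ x) := hqV x hxV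
    _ ≤ ι x ⬝ᵥ (M *ᵥ ι x) + c * (x ⬝ᵥ x) := h x
    _ ≤ μ k * (ι x ⬝ᵥ ι x) + c * (x ⬝ᵥ x) := by grw [hqU _ hxU]
    _ = (μ k + c) * (x ⬝ᵥ x) := by rw [hι]; ring

theorem le_add_of_compression_le (hM : M.IsHermitian) (hM' : M'.IsHermitian)
    (hμ : IsOrderedSpectrum M μ) (hν : IsOrderedSpectrum M' ν)
    (hι : ∀ x, ι x ⬝ᵥ ι x = x ⬝ᵥ x) {c : ℝ}
    (h : ∀ x, ι x ⬝ᵥ (M *ᵥ ι x) ≤ x ⬝ᵥ (M' *ᵥ x) + c * (x ⬝ᵥ x))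
    {p : Fin n} {k : Fin N} (hkp : (k : ℕ) ≤ p) : μ k ≤ ν p + c := by
  obtain ⟨V, hV, hqV⟩ := hν.exists_submodule_dotProduct_mulVec_le hM' p
  obtain ⟨U, hU, hqU⟩ := hμ.exists_submodule_le_dotProduct_mulVec hM k
  obtain ⟨x, hxV, hxU, hx0⟩ := Submodule.exists_ne_zero_mem_map_mem
    (LinearMap.injective_of_forall_dotProduct_self hι) (U := V) (U' := U)
    (by rw [finrank_fin_fun]; omega)
  refine le_of_mul_le_mul_right ?_ (dotProduct_self_pos_of_ne_zero hx0)
  calc μ k * (x ⬝ᵥ x) = μ k * (ι x ⬝ᵥ ι x) := by rw [hι]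
    _ ≤ ι x ⬝ᵥ (M *ᵥ ι x) := hqU _ hxU
    _ ≤ x ⬝ᵥ (M' *ᵥ x) + c * (x ⬝ᵥ x) := h x
    _ ≤ (ν p + c) * (x ⬝ᵥ x) := by linarith [hqV x hxV]

end IsOrderedSpectrum

theorem netLap_isHermitian {n : ℕ} {A : Matrix (Fin n) (Fin n) ℝ} (hA : A.IsSymm) :
    (netLap A).IsHermitian :=
  isHermitian_iff_isSymm.mpr ((isSymm_diagonal _).sub hA)

theorem IsSignedAdj.mem_Icc_of_negDeg_eq_zero {n : ℕ} {A : Matrix (Fin n) (Fin n) ℝ}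
    (hA : IsSignedAdj A) {v : Fin n} (hv : negDeg A v = 0) (j : Fin n) : A j v ∈ Set.Icc 0 1 := by
  have hneg : A v j ≠ -1 := fun h =>
    Set.notMem_empty j (((Set.ncard_eq_zero (Set.toFinite _)).mp hv) ▸ h)
  rw [hA.1.apply v j]
  rcases hA.2.2 v j with h | h | h <;> simp_all

section VertexDeletion

variable {m : ℕ} (v : Fin (m + 1))

def Fin.insertNthZeroLinearMap (R : Type*) [Semiring R] : (Fin m → R) →ₗ[R] (Fin (m + 1) → R) where
  toFun x := v.insertNth 0 x
  map_add' x y := by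
    ext j
    refine Fin.succAboveCases v ?_ (fun i => ?_) j <;> simp
  map_smul' c x := by
    ext j
    refine Fin.succAboveCases v ?_ (fun i => ?_) j <;> simp

theorem Fin.insertNthZeroLinearMap_apply {R : Type*} [Semiring R] (x : Fin m → R) :
    v.insertNthZeroLinearMap R x = v.insertNth 0 x :=
  rfl

variable {R : Type*} [CommSemiring R]

theorem insertNth_zero_dotProduct_insertNth_zero (x y : Fin m → R) :
    v.insertNth 0 x ⬝ᵥ v.insertNth 0 y = x ⬝ᵥ y := by
  simp [dotProduct, Fin.sum_univ_succAbove _ v]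

theorem insertNth_zero_dotProduct_mulVec (M : Matrix (Fin (m + 1)) (Fin (m + 1)) R)
    (x : Fin m → R) :
    v.insertNth 0 x ⬝ᵥ (M *ᵥ v.insertNth 0 x)
      = x ⬝ᵥ (M.submatrix v.succAbove v.succAbove *ᵥ x) := by
  simp [dotProduct, mulVec, Fin.sum_univ_succAbove _ v]

theorem netLap_submatrix_succAbove (A : Matrix (Fin (m + 1)) (Fin (m + 1)) ℝ) :
    (netLap A).submatrix v.succAbove v.succAbove
      = netLap (deleteVertex A v) + diagonal fun i => A (v.succAbove i) v := by
  ext i j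
  by_cases hij : i = j
  · subst hij
    simp only [netLap, deleteVertex, Fin.sum_univ_succAbove _ v, submatrix_apply,
      Matrix.sub_apply, Matrix.add_apply, diagonal_apply_eq]
    ring
  · simp [netLap, deleteVertex, hij]

end VertexDeletion

/-- deleting a vertex with zero negative degree, the ordered net-Laplacian
spectra satisfy alpha_p - 1 <= beta_p <= alpha_{p+1} for p = 1,...,m. -/
theorem stmt12 (m : ℕ) (A : Matrix (Fin (m+1)) (Fin (m+1)) ℝ) (hA : IsSignedAdj A)
    (v : Fin (m+1)) (hv : negDeg A v = 0)
    (α : Fin (m+1) → ℝ) (β : Fin m → ℝ)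
    (hα : IsOrderedSpectrum (netLap A) α)
    (hβ : IsOrderedSpectrum (netLap (deleteVertex A v)) β) :
    ∀ p : Fin m, α p.castSucc - 1 ≤ β p ∧ β p ≤ α p.succ := by
  have hN := netLap_isHermitian hA.1
  have hN' : (netLap (deleteVertex A v)).IsHermitian := netLap_isHermitian (hA.1.submatrix _)
  set ι := Fin.insertNthZeroLinearMap v ℝ
  have hι (x : Fin m → ℝ) : ι x ⬝ᵥ ι x = x ⬝ᵥ x :=
    insertNth_zero_dotProduct_insertNth_zero v x x
  have hq (x : Fin m → ℝ) : ι x ⬝ᵥ (netLap A *ᵥ ι x)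
      = x ⬝ᵥ (netLap (deleteVertex A v) *ᵥ x)
        + x ⬝ᵥ (diagonal (fun i => A (v.succAbove i) v) *ᵥ x) := by
    rw [Fin.insertNthZeroLinearMap_apply, insertNth_zero_dotProduct_mulVec,
      netLap_submatrix_succAbove, add_mulVec, dotProduct_add]
  have hw := dotProduct_diagonal_mulVec_mem_Icc
    fun i => hA.mem_Icc_of_negDeg_eq_zero hv (v.succAbove i)
  intro p
  constructor
  · have := hα.le_add_of_compression_le hN hN' hβ hι (c := 1)
      (fun x => by linarith [hq x, (hw x).2]) (k := p.castSucc) (p := p) le_rfl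
    linarith
  · simpa using hα.le_add_of_le_compression hN hN' hβ hι (c := 0)
      (fun x => by linarith [hq x, (hw x).1]) (k := p.succ) (p := p)
      (by simp only [Fin.val_succ]; omega)
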